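/- arXiv:1604.07049 — 3 statements merged into one kernel-verified Lean document; each statement's English description precedes it below -/
import Mathlib

section
/- Let T = (V, J) be a Gomory–Hu tree of graph G = (V, E) with respect to nonnegative edge values x, and let f be a proper function on V. Then min over S ⊆ V with f(S) ≠ 0 of x(δ_G(S))/f(S) equals min over tree edges e ∈ J with f(S_e) ≠ 0 of x(δ_G(S_e))/f(S_e), where S_e is one side of the cut of T induced by removing e. -/
/-- The set of edges of the graph (given by endpoint map `ends`) crossing the cut `S`. -/
noncomputable def cutEdges {V E : Type*} [Fintype E] (ends : E → V × V) (S : Set V) :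
    Finset E := by
  classical
  exact Finset.univ.filter
    (fun e => ((ends e).1 ∈ S ∧ (ends e).2 ∉ S) ∨ ((ends e).1 ∉ S ∧ (ends e).2 ∈ S))

/-- One side of the fundamental cut of the tree edge `{a,b}` in the tree `T`. -/
def treeSide {V : Type*} (T : SimpleGraph V) (a b : V) : Set V :=
  {w | (T.deleteEdges {s(a, b)}).Reachable w a}

section Aux
variable {V : Type*} {T : SimpleGraph V}

/-- Induction principle for reachability towards a fixed vertex. -/
lemma reach_ind {G' : SimpleGraph V} {P : V → Prop} {a : V} (ha : P a)
    (step : ∀ w u, G'.Adj w u → P u → P w) : ∀ w, G'.Reachable w a → P w := by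
  have key : ∀ (n : ℕ) (w : V) (p : G'.Walk w a), p.length = n → P w := by
    intro n
    induction n with
    | zero =>
      intro w p hp
      cases p with
      | nil => exact ha
      | cons h q => simp at hp
    | succ n ih =>
      intro w p hp
      cases p with
      | nil => exact ha
      | cons h q => exact step _ _ h (ih _ q (by simpa using hp))
  intro w hw
  obtain ⟨p⟩ := hw
  exact key p.length w p rfl

lemma mem_treeSide {a b w : V} :
    w ∈ treeSide T a b ↔ (T.deleteEdges {s(a, b)}).Reachable w a := Iff.rfl

lemma treeSide_swap_mem {a b w : V} :
    w ∈ treeSide T b a ↔ (T.deleteEdges {s(a, b)}).Reachable w b := by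
  rw [mem_treeSide, Sym2.eq_swap]

lemma not_reach_del (hT : T.IsTree) {a b : V} (hab : T.Adj a b) :
    ¬ (T.deleteEdges {s(a, b)}).Reachable a b := by
  have h := (SimpleGraph.isAcyclic_iff_forall_adj_isBridge.mp hT.IsAcyclic) hab
  rw [SimpleGraph.isBridge_iff] at h
  exact h

lemma mem_treeSide_self {a b : V} : a ∈ treeSide T a b := SimpleGraph.Reachable.refl a

lemma not_mem_treeSide_self (hT : T.IsTree) {a b : V} (hab : T.Adj a b) :
    b ∉ treeSide T a b := fun h => not_reach_del hT hab h.symm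

lemma side_partition (hT : T.IsTree) {a b : V} (hab : T.Adj a b) (w : V) :
    w ∈ treeSide T a b ∨ w ∈ treeSide T b a := by
  refine reach_ind (P := fun w => w ∈ treeSide T a b ∨ w ∈ treeSide T b a)
    (Or.inl mem_treeSide_self) ?_ w (hT.isConnected.preconnected w a)
  intro w u h hu
  by_cases he : s(w, u) = s(a, b)
  · rcases Sym2.eq_iff.mp he with ⟨rfl, rfl⟩ | ⟨rfl, rfl⟩
    · exact Or.inl mem_treeSide_self
    · exact Or.inr (treeSide_swap_mem.mpr (SimpleGraph.Reachable.refl _))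
  · have hadj : (T.deleteEdges {s(a, b)}).Adj w u := by
      simp only [SimpleGraph.deleteEdges_adj, Set.mem_singleton_iff]
      exact ⟨h, he⟩
    rcases hu with hu | hu
    · exact Or.inl (hadj.reachable.trans hu)
    · exact Or.inr (treeSide_swap_mem.mpr (hadj.reachable.trans (treeSide_swap_mem.mp hu)))

lemma treeSide_disjoint (hT : T.IsTree) {a b w : V} (hab : T.Adj a b)
    (h1 : w ∈ treeSide T a b) (h2 : w ∈ treeSide T b a) : False :=
  not_reach_del hT hab (h1.symm.trans (treeSide_swap_mem.mp h2))

lemma treeSide_compl (hT : T.IsTree) {a b : V} (hab : T.Adj a b) :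
    treeSide T b a = (treeSide T a b)ᶜ := by
  ext w
  constructor
  · intro h hc
    exact treeSide_disjoint hT hab hc h
  · intro h
    rcases side_partition hT hab w with h' | h'
    · exact absurd h' h
    · exact h'

lemma cutEdges_compl {E : Type*} [Fintype E] (ends : E → V × V) (S : Set V) :
    cutEdges ends Sᶜ = cutEdges ends S := by
  ext e
  simp only [cutEdges, Finset.mem_filter, Finset.mem_univ, true_and, Set.mem_compl_iff]
  tauto

lemma exists_cross {G : SimpleGraph V} {S : Set V} {u v : V}
    (h : G.Reachable u v) (hu : u ∈ S) (hv : v ∉ S) :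
    ∃ a b, G.Adj a b ∧ a ∈ S ∧ b ∉ S := by
  have := reach_ind (G' := G) (P := fun w => w ∈ S → ∃ a b, G.Adj a b ∧ a ∈ S ∧ b ∉ S)
    (a := v) (fun hvS => absurd hvS hv) ?_ u h
  · exact this hu
  · intro w z hwz hz hwS
    by_cases hzS : z ∈ S
    · exact hz hzS
    · exact ⟨w, z, hwz, hwS, hzS⟩

/-- the only tree edge leaving `treeSide T a b` is `(a,b)` itself. -/
lemma edge_out (hT : T.IsTree) {a b p q : V} (hab : T.Adj a b) (hpq : T.Adj p q)
    (hp : p ∈ treeSide T a b) (hq : q ∉ treeSide T a b) : p = a ∧ q = b := by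
  by_cases he : s(p, q) = s(a, b)
  · rcases Sym2.eq_iff.mp he with ⟨rfl, rfl⟩ | ⟨rfl, rfl⟩
    · exact ⟨rfl, rfl⟩
    · exact absurd mem_treeSide_self hq
  · have hadj : (T.deleteEdges {s(a, b)}).Adj q p := by
      simp only [SimpleGraph.deleteEdges_adj, Set.mem_singleton_iff]
      refine ⟨hpq.symm, fun hc => he ?_⟩
      rw [Sym2.eq_swap] at hc; exact hc
    exact absurd (hadj.reachable.trans hp) hq

lemma shrink (hT : T.IsTree) {a b c d : V} (hab : T.Adj a b) (hcd : T.Adj c d)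
    (hc : c ∈ treeSide T a b) (hd : d ∈ treeSide T a b) (hb : b ∈ treeSide T d c) :
    treeSide T c d ⊂ treeSide T a b := by
  have hsub : ∀ w, (T.deleteEdges {s(a, b)}).Reachable w b →
      w ∈ treeSide T d c ∧ (T.deleteEdges {s(a, b)}).Reachable w b := by
    refine reach_ind (P := fun w => w ∈ treeSide T d c ∧ (T.deleteEdges {s(a, b)}).Reachable w b)
      ⟨hb, SimpleGraph.Reachable.refl b⟩ ?_
    intro w u h hu
    have hwr : (T.deleteEdges {s(a, b)}).Reachable w b := h.reachable.trans hu.2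
    refine ⟨?_, hwr⟩
    by_cases he : s(w, u) = s(c, d)
    · rcases Sym2.eq_iff.mp he with ⟨rfl, rfl⟩ | ⟨rfl, rfl⟩
      · -- w = c : c reaches b in T - ab, contradiction with hc (c reaches a)
        exact absurd (hc.symm.trans hwr) (not_reach_del hT hab)
      · -- u = c : c ∈ treeSide T d c gives reachability c-d in T - cd
        exact absurd (treeSide_swap_mem.mp hu.1) (not_reach_del hT hcd)
    · have hadj : (T.deleteEdges {s(d, c)}).Adj w u := by
        simp only [SimpleGraph.deleteEdges_adj, Set.mem_singleton_iff]
        refine ⟨((SimpleGraph.deleteEdges_adj.mp h).1 : T.Adj w u), fun hcon => he ?_⟩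
        rw [hcon, Sym2.eq_swap]
      exact mem_treeSide.mpr (hadj.reachable.trans (mem_treeSide.mp hu.1))
  constructor
  · intro w hw
    by_contra hwA
    rcases side_partition hT hab w with h' | h'
    · exact hwA h'
    · exact treeSide_disjoint hT hcd hw (hsub w (treeSide_swap_mem.mp h')).1
  · intro hcon
    have hdm : d ∈ treeSide T c d := hcon hd
    exact not_reach_del hT hcd (mem_treeSide.mp hdm).symm

end Aux

section Key
variable {V : Type*} [Fintype V] {T : SimpleGraph V}

lemma cross_nonempty (hT : T.IsTree) {f : Set V → ℕ} (hV : f Set.univ = 0)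
    (hsym : ∀ S : Set V, f S = f Sᶜ) {S : Set V} (hfS : f S ≠ 0) :
    {p : V × V | T.Adj p.1 p.2 ∧ ¬(p.1 ∈ S ↔ p.2 ∈ S)}.Nonempty := by
  have hfempty : f (∅ : Set V) = 0 := by rw [hsym, Set.compl_empty]; exact hV
  have hSne : S.Nonempty := by
    rcases Set.eq_empty_or_nonempty S with rfl | h
    · exact absurd hfempty hfS
    · exact h
  have hSnu : S ≠ Set.univ := fun h => hfS (h ▸ hV)
  obtain ⟨v, hv⟩ : ∃ v, v ∉ S := by
    by_contra h; push_neg at h; exact hSnu (Set.eq_univ_of_forall h)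
  obtain ⟨u, hu⟩ := hSne
  obtain ⟨p, q, hpq, hp, hq⟩ := exists_cross (hT.isConnected.preconnected u v) hu hv
  exact ⟨(p, q), hpq, by tauto⟩

lemma key_lemma (hT : T.IsTree) (f : Set V → ℕ) (hV : f Set.univ = 0)
    (hsym : ∀ S : Set V, f S = f Sᶜ)
    (hmax : ∀ A B : Set V, Disjoint A B → f (A ∪ B) ≤ max (f A) (f B)) :
    ∀ (n : ℕ) (S : Set V),
      {p : V × V | T.Adj p.1 p.2 ∧ ¬(p.1 ∈ S ↔ p.2 ∈ S)}.ncard ≤ n → f S ≠ 0 →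
      ∃ a b, T.Adj a b ∧ ¬(a ∈ S ↔ b ∈ S) ∧ f S ≤ f (treeSide T a b) := by
  intro n
  induction n with
  | zero =>
    intro S hcard hfS
    have hne := cross_nonempty hT hV hsym hfS
    have hpos := (Set.ncard_pos (Set.toFinite _)).mpr hne
    omega
  | succ n ih =>
    intro S hcard hfS
    classical
    have hPne := cross_nonempty hT hV hsym hfS
    obtain ⟨⟨a, b⟩, habP, hmin⟩ := Set.exists_min_image
      {p : V × V | T.Adj p.1 p.2 ∧ ¬(p.1 ∈ S ↔ p.2 ∈ S)}
      (fun p => (treeSide T p.1 p.2).ncard) (Set.toFinite _) hPne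
    obtain ⟨hab, hcross⟩ := habP
    replace hab : T.Adj a b := hab
    replace hcross : ¬(a ∈ S ↔ b ∈ S) := hcross
    replace hmin : ∀ p ∈ {p : V × V | T.Adj p.1 p.2 ∧ ¬(p.1 ∈ S ↔ p.2 ∈ S)},
        (treeSide T a b).ncard ≤ (treeSide T p.1 p.2).ncard := hmin
    -- Step 1: no crossing edge inside the side A = treeSide T a b
    have hnocross : ∀ c d, T.Adj c d → c ∈ treeSide T a b → d ∈ treeSide T a b →
        (c ∈ S ↔ d ∈ S) := by
      intro c d hcd hcA hdA
      by_contra hx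
      rcases side_partition hT hcd b with hbcd | hbdc
      · have hss := shrink hT hab hcd.symm hdA hcA hbcd
        have hlt := Set.ncard_lt_ncard hss (Set.toFinite _)
        have hge : (treeSide T a b).ncard ≤ (treeSide T d c).ncard :=
          hmin (d, c) ⟨hcd.symm, by tauto⟩
        omega
      · have hss := shrink hT hab hcd hcA hdA hbdc
        have hlt := Set.ncard_lt_ncard hss (Set.toFinite _)
        have hge : (treeSide T a b).ncard ≤ (treeSide T c d).ncard := hmin (c, d) ⟨hcd, hx⟩
        omega
    -- Step 2: membership in S is constant on A
    have hconst : ∀ w, w ∈ treeSide T a b → (w ∈ S ↔ a ∈ S) := by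
      have := reach_ind (G' := T.deleteEdges {s(a, b)})
        (P := fun w => w ∈ treeSide T a b ∧ (w ∈ S ↔ a ∈ S))
        (a := a) ⟨mem_treeSide_self, Iff.rfl⟩ ?_
      · intro w hw
        exact (this w (mem_treeSide.mp hw)).2
      · intro w u h hu
        have hwA : w ∈ treeSide T a b := mem_treeSide.mpr (h.reachable.trans (mem_treeSide.mp hu.1))
        exact ⟨hwA, (hnocross w u (SimpleGraph.deleteEdges_adj.mp h).1 hwA hu.1).trans hu.2⟩
    -- Step 3: normalize so that a is inside
    obtain ⟨S', hS'cases, haS', hbS'⟩ : ∃ S', (S' = S ∨ S' = Sᶜ) ∧ a ∈ S' ∧ b ∉ S' := by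
      by_cases haS : a ∈ S
      · exact ⟨S, Or.inl rfl, haS, fun hbS => hcross ⟨fun _ => hbS, fun _ => haS⟩⟩
      · refine ⟨Sᶜ, Or.inr rfl, haS, ?_⟩
        have hbS : b ∈ S := by tauto
        simp only [Set.mem_compl_iff, not_not]
        exact hbS
    have hfS' : f S' = f S := by
      rcases hS'cases with rfl | rfl
      · rfl
      · exact (hsym S).symm
    have hAsub : treeSide T a b ⊆ S' := by
      intro w hw
      have hiff := hconst w hw
      rcases hS'cases with rfl | rfl
      · exact hiff.mpr haS'
      · simp only [Set.mem_compl_iff] at haS' ⊢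
        tauto
    have hunion : f S ≤ max (f (treeSide T a b)) (f (S' \ treeSide T a b)) := by
      have h := hmax (treeSide T a b) (S' \ treeSide T a b) disjoint_sdiff_self_right
      rw [Set.union_diff_cancel hAsub] at h
      omega
    rcases le_max_iff.mp hunion with hca | hcb
    · exact ⟨a, b, hab, hcross, hca⟩
    · -- recurse on S₂ = S' \ A
      set S₂ := S' \ treeSide T a b with hS₂
      have hq : ∀ p q : V, T.Adj p q → p ∈ S₂ → q ∉ S₂ → q ∉ S' := by
        intro p q hpq hp hqn hqS'
        have hqA : q ∈ treeSide T a b := by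
          by_contra h; exact hqn ⟨hqS', h⟩
        obtain ⟨rfl, rfl⟩ := edge_out hT hab hpq.symm hqA hp.2
        exact hbS' hp.1
      have hsubP : {p : V × V | T.Adj p.1 p.2 ∧ ¬(p.1 ∈ S₂ ↔ p.2 ∈ S₂)} ⊆
          {p : V × V | T.Adj p.1 p.2 ∧ ¬(p.1 ∈ S ↔ p.2 ∈ S)} \ {((a, b) : V × V), (b, a)} := by
        rintro ⟨p, q⟩ ⟨hpq, hx2⟩
        have main : (¬(p ∈ S' ↔ q ∈ S')) ∧ p ≠ a ∧ p ≠ b ∨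
            (¬(p ∈ S' ↔ q ∈ S')) ∧ q ≠ b ∧ q ≠ a := by
          by_cases hp2 : p ∈ S₂
          · have hq2 : q ∉ S₂ := by tauto
            have hqS' := hq p q hpq hp2 hq2
            refine Or.inl ⟨fun hiff => hqS' (hiff.mp hp2.1), ?_, ?_⟩
            · intro h; exact hp2.2 (h ▸ mem_treeSide_self)
            · intro h; exact hbS' (h ▸ hp2.1)
          · have hq2 : q ∈ S₂ := by tauto
            have hpS' := hq q p hpq.symm hq2 hp2
            refine Or.inr ⟨fun hiff => hpS' (hiff.mpr hq2.1), ?_, ?_⟩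
            · intro h; exact hbS' (h ▸ hq2.1)
            · intro h; exact hq2.2 (h ▸ mem_treeSide_self)
        have hcrossS : ¬(p ∈ S ↔ q ∈ S) := by
          rcases hS'cases with rfl | rfl
          · tauto
          · simp only [Set.mem_compl_iff] at main
            tauto
        refine ⟨⟨hpq, hcrossS⟩, fun hmem => ?_⟩
        rcases Set.mem_insert_iff.mp hmem with h | h
        · rcases main with ⟨_, ha1, _⟩ | ⟨_, hb1, _⟩
          · exact ha1 (congrArg Prod.fst h)
          · exact hb1 (congrArg Prod.snd h)
        · have h' : (p, q) = (b, a) := Set.mem_singleton_iff.mp h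
          rcases main with ⟨_, _, hb2⟩ | ⟨_, _, ha2⟩
          · exact hb2 (congrArg Prod.fst h')
          · exact ha2 (congrArg Prod.snd h')
      have hablt : ((a, b) : V × V) ∈
          {p : V × V | T.Adj p.1 p.2 ∧ ¬(p.1 ∈ S ↔ p.2 ∈ S)} := ⟨hab, hcross⟩
      have hssP : {p : V × V | T.Adj p.1 p.2 ∧ ¬(p.1 ∈ S ↔ p.2 ∈ S)} \
          {((a, b) : V × V), (b, a)} ⊂ {p : V × V | T.Adj p.1 p.2 ∧ ¬(p.1 ∈ S ↔ p.2 ∈ S)} := by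
        refine ⟨Set.diff_subset, fun hsup => ?_⟩
        exact (hsup hablt).2 (by simp)
      have h2 : {p : V × V | T.Adj p.1 p.2 ∧ ¬(p.1 ∈ S₂ ↔ p.2 ∈ S₂)}.ncard ≤ n := by
        have t1 := Set.ncard_le_ncard hsubP (Set.toFinite _)
        have t2 := Set.ncard_lt_ncard hssP (Set.toFinite _)
        omega
      have hfS₂ : f S₂ ≠ 0 := by omega
      obtain ⟨p, q, hpq, hx2, hle⟩ := ih S₂ h2 hfS₂
      have hm : ((p, q) : V × V) ∈ {p : V × V | T.Adj p.1 p.2 ∧ ¬(p.1 ∈ S₂ ↔ p.2 ∈ S₂)} :=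
        ⟨hpq, hx2⟩
      exact ⟨p, q, hpq, (hsubP hm).1.2, le_trans hcb hle⟩

end Key

theorem gomory_hu_shortest_row {V E : Type*} [Fintype V] [Fintype E]
    (ends : E → V × V) (x : E → ℝ) (hx : ∀ e, 0 ≤ x e)
    (T : SimpleGraph V) (hT : T.IsTree)
    -- Gomory–Hu property: for all `u ≠ v`, the minimum `x`-value of a cut of `G`
    -- separating `u` and `v` equals the minimum over the tree edges whose fundamental
    -- cut separates `u` and `v` (these are exactly the edges on the `u`-`v` path in `T`)
    -- of the `x`-value of the corresponding fundamental cut in `G`.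
    (hGH : ∀ u v : V, u ≠ v →
      sInf {r : ℝ | ∃ S : Set V, u ∈ S ∧ v ∉ S ∧ r = ∑ e ∈ cutEdges ends S, x e} =
      sInf {r : ℝ | ∃ a b : V, T.Adj a b ∧ ¬ (u ∈ treeSide T a b ↔ v ∈ treeSide T a b) ∧
        r = ∑ e ∈ cutEdges ends (treeSide T a b), x e})
    (f : Set V → ℕ)
    (hV : f Set.univ = 0)
    (hsym : ∀ S : Set V, f S = f Sᶜ)
    (hmax : ∀ A B : Set V, Disjoint A B → f (A ∪ B) ≤ max (f A) (f B))
    (hexS : ∃ S : Set V, f S ≠ 0)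
    (hexe : ∃ a b : V, T.Adj a b ∧ f (treeSide T a b) ≠ 0) :
    sInf {r : ℝ | ∃ S : Set V, f S ≠ 0 ∧
        r = (∑ e ∈ cutEdges ends S, x e) / (f S : ℝ)} =
    sInf {r : ℝ | ∃ a b : V, T.Adj a b ∧ f (treeSide T a b) ≠ 0 ∧
        r = (∑ e ∈ cutEdges ends (treeSide T a b), x e) / (f (treeSide T a b) : ℝ)} := by
  classical
  have hcut0 : ∀ S : Set V, 0 ≤ ∑ e ∈ cutEdges ends S, x e :=
    fun S => Finset.sum_nonneg fun e _ => hx e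
  -- the fundamental cut of any crossing tree edge is no more expensive than the cut itself
  have cut_side_le : ∀ a b : V, T.Adj a b → ∀ S : Set V, ¬(a ∈ S ↔ b ∈ S) →
      ∑ e ∈ cutEdges ends (treeSide T a b), x e ≤ ∑ e ∈ cutEdges ends S, x e := by
    intro a b hab S hxab
    have hGHab := hGH a b hab.ne
    have hRsub : {r : ℝ | ∃ c d : V, T.Adj c d ∧
        ¬ (a ∈ treeSide T c d ↔ b ∈ treeSide T c d) ∧
        r = ∑ e ∈ cutEdges ends (treeSide T c d), x e} =
        {∑ e ∈ cutEdges ends (treeSide T a b), x e} := by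
      apply Set.Subset.antisymm
      · rintro r ⟨c, d, hcd, hsep, rfl⟩
        by_cases he : s(c, d) = s(a, b)
        · rcases Sym2.eq_iff.mp he with ⟨rfl, rfl⟩ | ⟨rfl, rfl⟩
          · rfl
          · simp only [Set.mem_singleton_iff]
            rw [treeSide_compl hT hab, cutEdges_compl]
        · exfalso
          have hadj : (T.deleteEdges {s(c, d)}).Adj a b := by
            simp only [SimpleGraph.deleteEdges_adj, Set.mem_singleton_iff]
            exact ⟨hab, fun hcon => he hcon.symm⟩
          exact hsep ⟨fun h => hadj.symm.reachable.trans h, fun h => hadj.reachable.trans h⟩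
      · intro r hr
        rw [Set.mem_singleton_iff] at hr
        exact ⟨a, b, hab,
          fun hiff => not_mem_treeSide_self hT hab (hiff.mp mem_treeSide_self), hr⟩
    have hmemL : (∑ e ∈ cutEdges ends S, x e) ∈
        {r : ℝ | ∃ S' : Set V, a ∈ S' ∧ b ∉ S' ∧ r = ∑ e ∈ cutEdges ends S', x e} := by
      by_cases haS : a ∈ S
      · have hbS : b ∉ S := by tauto
        exact ⟨S, haS, hbS, rfl⟩
      · have hbS : b ∈ S := by tauto
        exact ⟨Sᶜ, haS, by simpa using hbS, by rw [cutEdges_compl]⟩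
    have hbddL : BddBelow {r : ℝ | ∃ S' : Set V, a ∈ S' ∧ b ∉ S' ∧
        r = ∑ e ∈ cutEdges ends S', x e} :=
      ⟨0, by rintro r ⟨S', _, _, rfl⟩; exact hcut0 S'⟩
    calc ∑ e ∈ cutEdges ends (treeSide T a b), x e
        = sInf {∑ e ∈ cutEdges ends (treeSide T a b), x e} := (csInf_singleton _).symm
      _ = sInf {r : ℝ | ∃ c d : V, T.Adj c d ∧
            ¬ (a ∈ treeSide T c d ↔ b ∈ treeSide T c d) ∧
            r = ∑ e ∈ cutEdges ends (treeSide T c d), x e} := by rw [hRsub]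
      _ = sInf {r : ℝ | ∃ S' : Set V, a ∈ S' ∧ b ∉ S' ∧
            r = ∑ e ∈ cutEdges ends S', x e} := hGHab.symm
      _ ≤ ∑ e ∈ cutEdges ends S, x e := csInf_le hbddL hmemL
  -- the two sets of ratios
  set L := {r : ℝ | ∃ S : Set V, f S ≠ 0 ∧
      r = (∑ e ∈ cutEdges ends S, x e) / (f S : ℝ)} with hL
  set R := {r : ℝ | ∃ a b : V, T.Adj a b ∧ f (treeSide T a b) ≠ 0 ∧
      r = (∑ e ∈ cutEdges ends (treeSide T a b), x e) / (f (treeSide T a b) : ℝ)} with hR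
  have hLne : L.Nonempty := by
    obtain ⟨S, hS⟩ := hexS
    exact ⟨_, S, hS, rfl⟩
  have hRne : R.Nonempty := by
    obtain ⟨a, b, hab, hf⟩ := hexe
    exact ⟨_, a, b, hab, hf, rfl⟩
  have hbddL : BddBelow L := by
    refine ⟨0, ?_⟩
    rintro r ⟨S, hS, rfl⟩
    exact div_nonneg (hcut0 S) (Nat.cast_nonneg _)
  have hbddR : BddBelow R := by
    refine ⟨0, ?_⟩
    rintro r ⟨a, b, hab, hf, rfl⟩
    exact div_nonneg (hcut0 _) (Nat.cast_nonneg _)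
  have hRL : R ⊆ L := by
    rintro r ⟨a, b, hab, hf, rfl⟩
    exact ⟨treeSide T a b, hf, rfl⟩
  apply le_antisymm
  · exact csInf_le_csInf hbddL hRne hRL
  · refine le_csInf hLne ?_
    rintro r ⟨S, hfS, rfl⟩
    obtain ⟨a, b, hab, hcross, hle⟩ := key_lemma hT f hV hsym hmax
      ({p : V × V | T.Adj p.1 p.2 ∧ ¬(p.1 ∈ S ↔ p.2 ∈ S)}.ncard) S le_rfl hfS
    have hfside : f (treeSide T a b) ≠ 0 := by omega
    have hcutle := cut_side_le a b hab S hcross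
    have hratio : (∑ e ∈ cutEdges ends (treeSide T a b), x e) / (f (treeSide T a b) : ℝ) ≤
        (∑ e ∈ cutEdges ends S, x e) / (f S : ℝ) := by
      apply div_le_div₀ (hcut0 S) hcutle
      · exact_mod_cast Nat.pos_of_ne_zero hfS
      · exact_mod_cast hle
    exact le_trans (csInf_le hbddR ⟨a, b, hab, hfside, rfl⟩) hratio
end

section
/- Let T = (V,J) be a Gomory–Hu tree of G = (V,E) with respect to x : E → ℝ≥0, and let f be a proper function. Then for every S ⊆ V, f(S) ≤ max over e ∈ δ_T(S) of f(S_e), where δ_T(S) are the tree edges crossing S and S_e is one side of the fundamental cut of e in T (provided δ_T(S) is nonempty). -/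
namespace GHAux

open SimpleGraph

variable {V : Type*}

lemma deleteEdges_swap (T : SimpleGraph V) (a b : V) :
    T.deleteEdges {s(a, b)} = T.deleteEdges {s(b, a)} := by
  rw [Sym2.eq_swap]

lemma mem_treeSide {T : SimpleGraph V} {a b w : V} :
    w ∈ treeSide T a b ↔ (T.deleteEdges {s(a, b)}).Reachable w a := Iff.rfl

lemma self_mem_treeSide (T : SimpleGraph V) (a b : V) : a ∈ treeSide T a b :=
  Reachable.refl a

lemma walk_reach_or {G : SimpleGraph V} {a b : V} :
    ∀ {w c : V}, G.Walk w c →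
      (G.deleteEdges {s(a, b)}).Reachable w c ∨
      (G.deleteEdges {s(a, b)}).Reachable w a ∨
      (G.deleteEdges {s(a, b)}).Reachable w b := by
  intro w c p
  induction p with
  | nil => exact Or.inl (Reachable.refl _)
  | @cons u x _ h q ih =>
    by_cases he : s(u, x) = s(a, b)
    · rw [Sym2.eq_iff] at he
      rcases he with ⟨rfl, rfl⟩ | ⟨rfl, rfl⟩
      · exact Or.inr (Or.inl (Reachable.refl _))
      · exact Or.inr (Or.inr (Reachable.refl _))
    · have h' : (G.deleteEdges {s(a, b)}).Adj u x := by
        rw [deleteEdges_adj]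
        exact ⟨h, by simpa using he⟩
      rcases ih with h1 | h1 | h1
      · exact Or.inl (h'.reachable.trans h1)
      · exact Or.inr (Or.inl (h'.reachable.trans h1))
      · exact Or.inr (Or.inr (h'.reachable.trans h1))

lemma not_reach_of_bridge {T : SimpleGraph V} (hT : T.IsAcyclic) {a b : V} (hab : T.Adj a b) :
    ¬ (T.deleteEdges {s(a, b)}).Reachable a b :=
  ((isAcyclic_iff_forall_adj_isBridge.mp hT) hab)

lemma treeSide_compl {T : SimpleGraph V} (hT : T.IsTree) {a b : V} (hab : T.Adj a b) :
    (treeSide T a b)ᶜ = treeSide T b a := by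
  ext w
  simp only [Set.mem_compl_iff, mem_treeSide]
  rw [← deleteEdges_swap T a b]
  constructor
  · intro hw
    obtain ⟨p⟩ := hT.isConnected.preconnected w a
    rcases walk_reach_or (a := a) (b := b) p with h | h | h
    · exact absurd h hw
    · exact absurd h hw
    · exact h
  · intro hw hwa
    exact not_reach_of_bridge hT.IsAcyclic hab (hwa.symm.trans hw)

lemma not_mem_treeSide_swap {T : SimpleGraph V} (hT : T.IsTree) {a b : V} (hab : T.Adj a b) :
    a ∉ treeSide T b a := by
  rw [← treeSide_compl hT hab]
  simp only [Set.mem_compl_iff, not_not]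
  exact self_mem_treeSide T a b

/-- The only `T`-edge leaving the side of `b` is `{a,b}` itself. -/
lemma adj_leaving {T : SimpleGraph V} (hT : T.IsTree) {a b x y : V} (hab : T.Adj a b)
    (hx : x ∈ treeSide T b a) (hy : y ∉ treeSide T b a) (hxy : T.Adj x y) :
    x = b ∧ y = a := by
  by_cases he : s(x, y) = s(a, b)
  · rw [Sym2.eq_iff] at he
    rcases he with ⟨rfl, rfl⟩ | ⟨rfl, rfl⟩
    · exact absurd hx (not_mem_treeSide_swap hT hab)
    · exact ⟨rfl, rfl⟩
  · exfalso
    have h' : (T.deleteEdges {s(b, a)}).Adj y x := by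
      rw [deleteEdges_adj]
      refine ⟨hxy.symm, ?_⟩
      simp only [Set.mem_singleton_iff]
      intro hc
      exact he (Sym2.eq_swap.trans (hc.trans Sym2.eq_swap))
    exact hy (mem_treeSide.mpr (h'.reachable.trans (mem_treeSide.mp hx)))

/-- If both endpoints of an edge `{x,y}` lie in the side `B` of edge `{a,b}`,
then one of the sides of `{x,y}` is strictly contained in `B`. -/
lemma side_strict_sub {T : SimpleGraph V} [DecidableEq V] (hT : T.IsTree) {a b x y : V}
    (hab : T.Adj a b) (hxy : T.Adj x y)
    (hx : x ∈ treeSide T b a) (hy : y ∈ treeSide T b a) :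
    (treeSide T x y ⊂ treeSide T b a) ∨ (treeSide T y x ⊂ treeSide T b a) := by
  have key : ∀ x' y' : V, T.Adj x' y' → x' ∈ treeSide T b a → y' ∈ treeSide T b a →
      a ∉ treeSide T x' y' → treeSide T x' y' ⊂ treeSide T b a := by
    intro x' y' hxy' hx' hy' ha'
    have hsub : treeSide T x' y' ⊆ treeSide T b a := by
      intro w hw
      by_contra hwB
      have hwA : w ∈ treeSide T a b := by
        rw [← treeSide_compl hT hab] at hwB
        simpa using hwB
      apply ha'
      obtain ⟨p⟩ : (T.deleteEdges {s(a, b)}).Reachable w a := hwA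
      have hedges : ∀ e ∈ p.edges, e ∈ (T.deleteEdges {s(x', y')}).edgeSet := by
        intro e hep
        have heT : e ∈ (T.deleteEdges {s(a, b)}).edgeSet := p.edges_subset_edgeSet hep
        rw [edgeSet_deleteEdges] at heT ⊢
        refine ⟨heT.1, ?_⟩
        simp only [Set.mem_singleton_iff]
        intro hexy
        have hxs : x' ∈ p.support := p.fst_mem_support_of_mem_edges (hexy ▸ hep)
        have hreach : (T.deleteEdges {s(a, b)}).Reachable x' a := ⟨p.dropUntil x' hxs⟩
        have hxA : x' ∈ treeSide T a b := hreach
        rw [← treeSide_compl hT hab] at hx'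
        exact hx' hxA
      have q := p.transfer (T.deleteEdges {s(x', y')}) hedges
      exact mem_treeSide.mpr (q.reverse.reachable.trans (mem_treeSide.mp hw))
    refine ⟨hsub, fun hsup => ?_⟩
    have hy'C : y' ∉ treeSide T x' y' := by
      have hself : y' ∈ treeSide T y' x' := self_mem_treeSide T y' x'
      rw [← treeSide_compl hT hxy'] at hself
      exact hself
    exact hy'C (hsup hy')
  by_cases ha : a ∈ treeSide T x y
  · right
    apply key y x hxy.symm hy hx
    rw [← treeSide_compl hT hxy]
    simpa using ha
  · exact Or.inl (key x y hxy hx hy ha)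

/-- Oriented crossing pairs of a set `S`. -/
def cp (T : SimpleGraph V) (S : Set V) : Set (V × V) :=
  {p | T.Adj p.1 p.2 ∧ ((p.1 ∈ S ∧ p.2 ∉ S) ∨ (p.1 ∉ S ∧ p.2 ∈ S))}

/-- The candidate supremum set. -/
def supS (T : SimpleGraph V) (f : Set V → ℕ) (S : Set V) : Set ℕ :=
  {n | ∃ a b : V, T.Adj a b ∧ ((a ∈ S ∧ b ∉ S) ∨ (a ∉ S ∧ b ∈ S)) ∧
      n = f (treeSide T a b)}

lemma cp_compl (T : SimpleGraph V) (S : Set V) : cp T Sᶜ = cp T S := by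
  ext ⟨x, y⟩
  simp only [cp, Set.mem_setOf_eq, Set.mem_compl_iff, not_not]
  tauto

lemma supS_compl (T : SimpleGraph V) (f : Set V → ℕ) (S : Set V) :
    supS T f Sᶜ = supS T f S := by
  ext n
  simp only [supS, Set.mem_setOf_eq, Set.mem_compl_iff, not_not]
  constructor <;> (rintro ⟨a, b, h1, h2, h3⟩; exact ⟨a, b, h1, by tauto, h3⟩)

lemma cp_empty {T : SimpleGraph V} (hT : T.IsTree) {S : Set V} (h : cp T S = ∅) :
    S = ∅ ∨ S = Set.univ := by
  by_contra hcon
  push_neg at hcon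
  obtain ⟨h1, h2⟩ := hcon
  obtain ⟨u, hu⟩ := h1
  obtain ⟨v, hv⟩ : ∃ v, v ∉ S := by
    by_contra hc
    push_neg at hc
    exact h2 (Set.eq_univ_of_forall hc)
  obtain ⟨p⟩ := hT.isConnected.preconnected u v
  obtain ⟨d, hd, h3, h4⟩ := p.exists_boundary_dart S hu hv
  have : (d.fst, d.snd) ∈ cp T S := ⟨d.adj, Or.inl ⟨h3, h4⟩⟩
  rw [h] at this
  exact this

lemma bddAbove_supS [Fintype V] (T : SimpleGraph V) (f : Set V → ℕ) (S : Set V) :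
    BddAbove (supS T f S) := by
  refine ((Set.finite_range f).subset ?_).bddAbove
  rintro n ⟨a, b, _, _, rfl⟩
  exact ⟨_, rfl⟩

lemma aux [Fintype V] [DecidableEq V] (T : SimpleGraph V) (hT : T.IsTree)
    (f : Set V → ℕ)
    (hV : f Set.univ = 0)
    (hsym : ∀ S : Set V, f S = f Sᶜ)
    (hmax : ∀ A B : Set V, Disjoint A B → f (A ∪ B) ≤ max (f A) (f B)) :
    ∀ (n : ℕ) (S : Set V), (cp T S).Nonempty → (cp T S).ncard ≤ n →
      f S ≤ sSup (supS T f S) := by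
  intro n
  induction n with
  | zero =>
    intro S hne hcard
    have := (Set.ncard_pos (Set.toFinite _)).mpr hne
    omega
  | succ n ih =>
    have key : ∀ S : Set V, (cp T S).ncard ≤ n + 1 →
        ∀ a b : V, (a, b) ∈ cp T S →
        (∀ q ∈ cp T S, (treeSide T b a).ncard ≤ (treeSide T q.2 q.1).ncard) →
        b ∉ S → f S ≤ sSup (supS T f S) := by
      intro S hcard a b hab' hmin hbS
      have hab : T.Adj a b := hab'.1
      have haS : a ∈ S := by
        rcases hab'.2 with ⟨h1, _⟩ | ⟨_, h2⟩
        · exact h1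
        · exact absurd h2 hbS
      set B := treeSide T b a with hB
      -- B is entirely outside S
      have hBS : ∀ z ∈ B, z ∉ S := by
        intro z hzB hzS
        obtain ⟨p⟩ : (T.deleteEdges {s(b, a)}).Reachable z b := hzB
        obtain ⟨d, hd, hdf, hds⟩ := p.exists_boundary_dart S hzS hbS
        have hfB : d.fst ∈ B :=
          mem_treeSide.mpr ⟨p.dropUntil d.fst (Walk.dart_fst_mem_support_of_mem_darts p hd)⟩
        have hsB : d.snd ∈ B := mem_treeSide.mpr (d.adj.symm.reachable.trans (mem_treeSide.mp hfB))
        have hxyT : T.Adj d.fst d.snd := (deleteEdges_adj.mp d.adj).1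
        rcases side_strict_sub hT hab hxyT hfB hsB with hC | hC
        · have hmem : (d.snd, d.fst) ∈ cp T S := ⟨hxyT.symm, Or.inr ⟨hds, hdf⟩⟩
          have h1 := hmin _ hmem
          have h2 := Set.ncard_lt_ncard hC (Set.toFinite _)
          simp only [hB] at h1 h2
          omega
        · have hmem : (d.fst, d.snd) ∈ cp T S := ⟨hxyT, Or.inl ⟨hdf, hds⟩⟩
          have h1 := hmin _ hmem
          have h2 := Set.ncard_lt_ncard hC (Set.toFinite _)
          simp only [hB] at h1 h2
          omega
      have haB : a ∉ B := not_mem_treeSide_swap hT hab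
      have hbB : b ∈ B := self_mem_treeSide T b a
      set S' := S ∪ B with hS'
      -- crossing pairs of S'
      have fwd : ∀ x y : V, T.Adj x y → x ∈ S' → y ∉ S' →
          (x ∈ S ∧ y ∉ S) ∧ ¬(x = a ∧ y = b) ∧ ¬(x = b ∧ y = a) := by
        intro x y hadj hx hy
        have hyS : y ∉ S := fun h => hy (Or.inl h)
        have hyB : y ∉ B := fun h => hy (Or.inr h)
        have hxS : x ∈ S := by
          rcases hx with h | h
          · exact h
          · exfalso
            obtain ⟨rfl, rfl⟩ := adj_leaving hT hab h hyB hadj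
            exact hy (Or.inl haS)
        refine ⟨⟨hxS, hyS⟩, ?_, ?_⟩
        · rintro ⟨rfl, rfl⟩; exact hyB hbB
        · rintro ⟨rfl, rfl⟩; exact hBS x hbB hxS
      have bwd : ∀ x y : V, T.Adj x y → x ∈ S → y ∉ S → ¬(x = a ∧ y = b) → y ∉ S' := by
        intro x y hadj hx hy hne hyS'
        rcases hyS' with h | h
        · exact hy h
        · have hxB : x ∉ B := fun hxB => hBS x hxB hx
          obtain ⟨rfl, rfl⟩ := adj_leaving hT hab h hxB hadj.symm
          exact hne ⟨rfl, rfl⟩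
      have hcp' : cp T S' = cp T S \ {(a, b), (b, a)} := by
        ext ⟨x, y⟩
        simp only [cp, Set.mem_setOf_eq, Set.mem_diff, Set.mem_insert_iff,
          Set.mem_singleton_iff, Prod.mk.injEq]
        constructor
        · rintro ⟨hadj, hcr⟩
          rcases hcr with ⟨hx, hy⟩ | ⟨hx, hy⟩
          · obtain ⟨⟨h1, h2⟩, h3, h4⟩ := fwd x y hadj hx hy
            exact ⟨⟨hadj, Or.inl ⟨h1, h2⟩⟩, by tauto⟩
          · obtain ⟨⟨h1, h2⟩, h3, h4⟩ := fwd y x hadj.symm hy hx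
            refine ⟨⟨hadj, Or.inr ⟨h2, h1⟩⟩, ?_⟩
            rintro (⟨rfl, rfl⟩ | ⟨rfl, rfl⟩)
            · exact h4 ⟨rfl, rfl⟩
            · exact h3 ⟨rfl, rfl⟩
        · rintro ⟨⟨hadj, hcr⟩, hne⟩
          refine ⟨hadj, ?_⟩
          rcases hcr with ⟨hx, hy⟩ | ⟨hx, hy⟩
          · exact Or.inl ⟨Or.inl hx, bwd x y hadj hx hy (fun h => hne (Or.inl h))⟩
          · exact Or.inr ⟨bwd y x hadj.symm hy hx
              (fun ⟨h1, h2⟩ => hne (Or.inr ⟨h2, h1⟩)), Or.inl hy⟩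
      have hss : cp T S' ⊂ cp T S := by
        rw [hcp']
        refine ⟨Set.diff_subset, fun h => ?_⟩
        have := (h hab').2
        simp at this
      have hcard' : (cp T S').ncard ≤ n := by
        have := Set.ncard_lt_ncard hss (Set.toFinite _)
        omega
      have hbdd := bddAbove_supS T f S
      have hfB_mem : f B ∈ supS T f S := ⟨b, a, hab.symm, Or.inr ⟨hbS, haS⟩, rfl⟩
      have hfB : f B ≤ sSup (supS T f S) := le_csSup hbdd hfB_mem
      have hS'le : f S' ≤ sSup (supS T f S) := by
        rcases (cp T S').eq_empty_or_nonempty with hemp | hne'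
        · rcases cp_empty hT hemp with h | h
          · exact absurd h (Set.nonempty_iff_ne_empty.mp ⟨a, Or.inl haS⟩)
          · rw [h, hV]; exact Nat.zero_le _
        · refine (ih S' hne' hcard').trans (csSup_le_csSup hbdd ?_ ?_)
          · obtain ⟨⟨x, y⟩, hp⟩ := hne'
            exact ⟨f (treeSide T x y), x, y, hp.1, hp.2, rfl⟩
          · rintro m ⟨x, y, hadj, hcr, rfl⟩
            have hmem : (x, y) ∈ cp T S' := ⟨hadj, hcr⟩
            rw [hcp'] at hmem
            exact ⟨x, y, hadj, hmem.1.2, rfl⟩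
      have hSc : Sᶜ = S'ᶜ ∪ B := by
        ext z
        simp only [Set.mem_compl_iff, Set.mem_union, hS']
        by_cases hzB : z ∈ B
        · simp [hzB, hBS z hzB]
        · simp [hzB]
      have hdisj2 : Disjoint S'ᶜ B := by
        rw [Set.disjoint_left]
        intro z hz hzB
        exact hz (Or.inr hzB)
      calc f S = f Sᶜ := hsym S
        _ = f (S'ᶜ ∪ B) := by rw [hSc]
        _ ≤ max (f S'ᶜ) (f B) := hmax _ _ hdisj2
        _ = max (f S') (f B) := by rw [← hsym S']
        _ ≤ sSup (supS T f S) := max_le hS'le hfB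
    intro S hne hcard
    obtain ⟨p₀, hp₀, hmin⟩ := Set.exists_min_image (cp T S)
      (fun p => (treeSide T p.2 p.1).ncard) (Set.toFinite _) hne
    obtain ⟨a, b⟩ := p₀
    by_cases hbS : b ∈ S
    · have hc : (a, b) ∈ cp T Sᶜ := by rw [cp_compl]; exact hp₀
      have hmin' : ∀ q ∈ cp T Sᶜ, (treeSide T b a).ncard ≤ (treeSide T q.2 q.1).ncard := by
        rw [cp_compl]; exact hmin
      have h := key Sᶜ (by rw [cp_compl]; exact hcard) a b hc hmin' (by simp [hbS])
      calc f S = f Sᶜ := hsym S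
        _ ≤ sSup (supS T f Sᶜ) := h
        _ = sSup (supS T f S) := by rw [supS_compl]
    · exact key S hcard a b hp₀ hmin hbS

end GHAux

theorem proper_le_sup_fundamental_cuts {V : Type*} [Fintype V]
    (T : SimpleGraph V) (hT : T.IsTree)
    (f : Set V → ℕ)
    (hV : f Set.univ = 0)
    (hsym : ∀ S : Set V, f S = f Sᶜ)
    (hmax : ∀ A B : Set V, Disjoint A B → f (A ∪ B) ≤ max (f A) (f B))
    (S : Set V) (hSne : S.Nonempty) (hSproper : S ≠ Set.univ)
    (hcross : ∃ a b : V, T.Adj a b ∧ ((a ∈ S ∧ b ∉ S) ∨ (a ∉ S ∧ b ∈ S))) :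
    f S ≤ sSup {n : ℕ | ∃ a b : V, T.Adj a b ∧ ((a ∈ S ∧ b ∉ S) ∨ (a ∉ S ∧ b ∈ S)) ∧
      n = f (treeSide T a b)} := by
  classical
  obtain ⟨a, b, h1, h2⟩ := hcross
  exact GHAux.aux T hT f hV hsym hmax (GHAux.cp T S).ncard S ⟨(a, b), h1, h2⟩ le_rfl
end

section
/- Suppose a sequence of edges e₁,…,e_t of G is such that every S ⊆ V with f(S) − z(δ(S)) ≥ 1 satisfies δ(S) ∩ {e₁,…,e_t} ≠ ∅, and each e_k satisfies x(e_k) = max_{e ∈ δ(U_k)} x(e) for some set U_k with f(U_k) − z(δ(U_k)) ≥ 1. Let p minimize x(e_p), γ_min = 2x(e_p)/|E|, γ_max = x(δ(U_p)). If additionally f(S) − z(δ(S)) ≤ |E|/2 for all S, then every S with f(S) − z(δ(S)) ≥ 1 satisfies x(δ(S))/(f(S) − z(δ(S))) ≥ γ_min, there exists S with x(δ(S))/(f(S) − z(δ(S))) ≤ γ_max, and γ_max ≤ (|E|²/2)·γ_min. -/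
theorem upper_lower_bounds {V E : Type*} [Fintype V] [Fintype E]
    (ends : E → V × V) (x : E → ℝ) (hx : ∀ e', 0 ≤ x e') (z : E → ℕ)
    (f : Set V → ℤ)
    (t : ℕ) (e : Fin t → E) (hxe : ∀ k, 0 < x (e k))
    -- the edges `e 0, …, e (t-1)` hit every violated cut
    (hhit : ∀ S : Set V,
      1 ≤ (f S : ℝ) - ∑ e' ∈ cutEdges ends S, (z e' : ℝ) → ∃ k, e k ∈ cutEdges ends S)
    -- each `e k` is a maximum `x`-value edge of some violated cut `δ(U k)`
    (U : Fin t → Set V)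
    (hU : ∀ k, 1 ≤ (f (U k) : ℝ) - ∑ e' ∈ cutEdges ends (U k), (z e' : ℝ))
    (hmem : ∀ k, e k ∈ cutEdges ends (U k))
    (hmaxedge : ∀ k, ∀ e' ∈ cutEdges ends (U k), x e' ≤ x (e k))
    -- `p` minimizes `x (e p)`
    (p : Fin t) (hp : ∀ k, x (e p) ≤ x (e k))
    -- requirements are bounded by `|E|/2`
    (hbound : ∀ S : Set V,
      (f S : ℝ) - ∑ e' ∈ cutEdges ends S, (z e' : ℝ) ≤ (Fintype.card E : ℝ) / 2) :
    (∀ S : Set V, 1 ≤ (f S : ℝ) - ∑ e' ∈ cutEdges ends S, (z e' : ℝ) →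
        2 * x (e p) / (Fintype.card E : ℝ) ≤
          (∑ e' ∈ cutEdges ends S, x e') /
            ((f S : ℝ) - ∑ e' ∈ cutEdges ends S, (z e' : ℝ))) ∧
    (∃ S : Set V, 1 ≤ (f S : ℝ) - ∑ e' ∈ cutEdges ends S, (z e' : ℝ) ∧
        (∑ e' ∈ cutEdges ends S, x e') /
            ((f S : ℝ) - ∑ e' ∈ cutEdges ends S, (z e' : ℝ)) ≤
          ∑ e' ∈ cutEdges ends (U p), x e') ∧
    (∑ e' ∈ cutEdges ends (U p), x e') ≤
      ((Fintype.card E : ℝ) ^ 2 / 2) * (2 * x (e p) / (Fintype.card E : ℝ)) := by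
  have hE : (0:ℝ) < (Fintype.card E : ℝ) := by
    have : Nonempty E := ⟨e p⟩
    exact_mod_cast Fintype.card_pos
  refine ⟨?_, ⟨U p, hU p, ?_⟩, ?_⟩
  · intro S hS
    obtain ⟨k, hk⟩ := hhit S hS
    have hnum : x (e p) ≤ ∑ e' ∈ cutEdges ends S, x e' :=
      le_trans (hp k) (Finset.single_le_sum (fun i _ => hx i) hk)
    have hb := hbound S
    rw [div_le_div_iff₀ hE (by linarith)]
    nlinarith [hxe p]
  · have h1 := hU p
    have hnum : 0 ≤ ∑ e' ∈ cutEdges ends (U p), x e' :=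
      Finset.sum_nonneg fun i _ => hx i
    calc (∑ e' ∈ cutEdges ends (U p), x e') /
          ((f (U p) : ℝ) - ∑ e' ∈ cutEdges ends (U p), (z e' : ℝ))
        ≤ (∑ e' ∈ cutEdges ends (U p), x e') / 1 :=
          div_le_div_of_nonneg_left hnum (by norm_num) h1 |>.trans_eq rfl
      _ = _ := div_one _
  · have hsum : ∑ e' ∈ cutEdges ends (U p), x e'
        ≤ (cutEdges ends (U p)).card • x (e p) :=
      Finset.sum_le_card_nsmul _ _ _ (hmaxedge p)
    have hcard : ((cutEdges ends (U p)).card : ℝ) ≤ (Fintype.card E : ℝ) := by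
      exact_mod_cast Finset.card_le_univ _
    rw [nsmul_eq_mul] at hsum
    have := hxe p
    have heq : ((Fintype.card E : ℝ) ^ 2 / 2) * (2 * x (e p) / (Fintype.card E : ℝ))
        = (Fintype.card E : ℝ) * x (e p) := by
      field_simp
    rw [heq]
    nlinarith
end
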